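/- arXiv:2309.08834 — 3 statements merged into one kernel-verified Lean document; each statement's English description precedes it below -/
import Mathlib

section
/- Let M ≥ 1 and 1 ≤ ℓ ≤ M. For a uniformly random function f : {1,…,M} → {1,…,M}, the probability that the functional graph of f is connected and f has exactly ℓ periodic points equals Π₁(ℓ,M) = M! / ((M−ℓ)! · M^{ℓ+1}). -/
/-!
Joyal's bijection. Let `f` be connected with `ℓ` periodic points and let `v` be a marked point.
The orbit of `v` is a tail `v, f v, …, f^[k-1] v` followed by the cycle, entered at `z = f^[k] v`.
Record the cycle as the injection `j i = f^[i] z` and replace `f` by the map `g` which fixes the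
cycle, sends the `i`-th element of a fixed enumeration of the (unordered) tail set to `f^[i] v`,
and agrees with `f` elsewhere. The periodic points of `g` off the range of `j` are exactly the tail
points, so the tail, in order, is recovered by applying `g` to their enumeration, and `f`, `v` are
recovered from `j` and `g`. Hence `N * M = M! / (M - ℓ)! * M ^ (M - ℓ)`, where `N` counts the
connected maps with `ℓ` periodic points: there are `M! / (M - ℓ)!` injections `j`, and `g` is
arbitrary off the range of `j`.
-/

open Function Set

variable {α : Type*}

namespace Function

variable {f g : α → α} {s : Set α} {x z : α}

theorem exists_iterate_mem_periodicPts [Finite α] (f : α → α) (x : α) :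
    ∃ n, f^[n] x ∈ periodicPts f := by
  obtain ⟨a, b, hne, heq⟩ := Finite.exists_ne_map_eq_of_infinite (f^[·] x)
  wlog hab : a < b generalizing a b
  · exact this b a hne.symm heq.symm (by omega)
  refine ⟨a, mk_mem_periodicPts (n := b - a) (by omega) ?_⟩
  rw [IsPeriodicPt, IsFixedPt, ← iterate_add_apply, Nat.sub_add_cancel hab.le]
  exact heq.symm

theorem mem_of_iterate_mem_of_mem_periodicPts (hs : MapsTo f s s) (hx : x ∈ periodicPts f)
    {m : ℕ} (hm : f^[m] x ∈ s) : x ∈ s := by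
  have hp := minimalPeriod_pos_of_mem_periodicPts hx
  have hper : f^[minimalPeriod f x * m] x = x :=
    ((isPeriodicPt_minimalPeriod f x).mul_const m).eq
  have hle : m ≤ minimalPeriod f x * m := Nat.le_mul_of_pos_left m hp
  rw [← hper, ← Nat.sub_add_cancel hle, iterate_add_apply]
  exact hs.iterate _ hm

theorem subset_periodicPts_of_mapsTo_of_injOn (hfin : s.Finite) (hs : MapsTo f s s)
    (hinj : InjOn f s) : s ⊆ periodicPts f := by
  have : Finite s := hfin
  intro x hx
  have hsemi : Semiconj Subtype.val (hs.restrict f s s) f := fun _ => rfl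
  exact hsemi.mapsTo_periodicPts (((hs.restrict_inj).mpr hinj).mem_periodicPts ⟨x, hx⟩)

theorem exists_iterate_mem_of_eqOn_compl [Finite α] (hfg : EqOn f g sᶜ)
    (hg : periodicPts g ⊆ s) (x : α) : ∃ n, f^[n] x ∈ s := by
  obtain ⟨n, hn⟩ := exists_iterate_mem_periodicPts g x
  induction n generalizing x with
  | zero => exact ⟨0, hg hn⟩
  | succ n ih =>
    by_cases hx : x ∈ s
    · exact ⟨0, hx⟩
    obtain ⟨m, hm⟩ := ih (g x) hn
    refine ⟨m + 1, ?_⟩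
    rwa [iterate_succ_apply, hfg hx]

theorem injective_iterate_fin_minimalPeriod (f : α → α) (z : α) :
    Injective fun i : Fin (minimalPeriod f z) => f^[i] z :=
  fun a b hab => Fin.ext (iterate_injOn_Iio_minimalPeriod a.isLt b.isLt hab)

theorem range_iterate_fin_minimalPeriod (hz : z ∈ periodicPts f) :
    range (fun i : Fin (minimalPeriod f z) => f^[i] z) = range (f^[·] z) := by
  refine Subset.antisymm (range_subset_iff.mpr fun i => ⟨i, rfl⟩) ?_
  rintro _ ⟨n, rfl⟩
  exact ⟨⟨n % minimalPeriod f z, Nat.mod_lt _ (minimalPeriod_pos_of_mem_periodicPts hz)⟩,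
    iterate_mod_minimalPeriod_eq⟩

def HasConnectedGraph (f : α → α) : Prop :=
  ∀ x y : α, ∃ m n : ℕ, f^[m] x = f^[n] y

theorem HasConnectedGraph.periodicPts_eq_range_iterate (hf : HasConnectedGraph f)
    (hz : z ∈ periodicPts f) : periodicPts f = range (f^[·] z) := by
  refine Subset.antisymm (fun y hy => ?_) ?_
  · obtain ⟨m, n, hmn⟩ := hf z y
    refine mem_of_iterate_mem_of_mem_periodicPts ?_ hy (m := n) ⟨m, hmn⟩
    rintro _ ⟨i, rfl⟩
    exact ⟨i + 1, iterate_succ_apply' f i z⟩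
  · rintro _ ⟨i, rfl⟩
    obtain ⟨n, hn, hper⟩ := hz
    exact mk_mem_periodicPts hn (hper.apply_iterate i)

theorem HasConnectedGraph.minimalPeriod_eq_ncard (hf : HasConnectedGraph f)
    (hz : z ∈ periodicPts f) : minimalPeriod f z = (periodicPts f).ncard := by
  rw [hf.periodicPts_eq_range_iterate hz, ← range_iterate_fin_minimalPeriod hz,
    ncard_range_of_injective (injective_iterate_fin_minimalPeriod f z), Nat.card_fin]

end Function

open Function

section Lasso

open Classical in
/-- Steps along `l`; past the last element `getD` returns `z`, which closes the loop. -/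
noncomputable def lasso (l : List α) (z : α) (g : α → α) (x : α) : α :=
  if x ∈ l then l.getD (l.idxOf x + 1) z else g x

variable {l : List α} {f : α → α} {x : α}

theorem lasso_getElem (hl : l.Nodup) (z : α) (g : α → α) {i : ℕ} (hi : i < l.length) :
    lasso l z g l[i] = l.getD (i + 1) z := by
  classical
  rw [lasso, if_pos (List.getElem_mem hi), hl.idxOf_getElem]

theorem lasso_of_notMem (z : α) (g : α → α) (hx : x ∉ l) : lasso l z g x = g x := by
  classical
  rw [lasso, if_neg hx]

theorem iterate_lasso_getD (hl : l.Nodup) (z : α) (g : α → α) {i : ℕ} (hi : i ≤ l.length) :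
    (lasso l z g)^[i] (l.getD 0 z) = l.getD i z := by
  induction i with
  | zero => rfl
  | succ i ih =>
    rw [iterate_succ_apply', ih (by omega), List.getD_eq_getElem _ _ (by omega),
      lasso_getElem hl]

theorem lasso_iterate_eq {n : ℕ} {v : α} (hl : (List.iterate f v n).Nodup) (g : α → α)
    (hx : x ∈ List.iterate f v n) : lasso (List.iterate f v n) (f^[n] v) g x = f x := by
  obtain ⟨i, hi, rfl⟩ := List.mem_iterate.mp hx
  have hi' : i < (List.iterate f v n).length := by rwa [List.length_iterate]
  have := lasso_getElem hl (f^[n] v) g hi'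
  rw [List.getElem_iterate] at this
  rw [this, ← iterate_succ_apply' f i v]
  rcases Nat.lt_or_ge (i + 1) n with h | h
  · rw [List.getD_eq_getElem _ _ (by rwa [List.length_iterate]), List.getElem_iterate]
  · rw [List.getD_eq_default _ _ (by rw [List.length_iterate]; omega),
      show i.succ = n by omega]

end Lasso

section Orbit

variable [Finite α] {f : α → α} {x : α}

open Classical in
noncomputable def entryTime (f : α → α) (x : α) : ℕ :=
  Nat.find (exists_iterate_mem_periodicPts f x)

theorem iterate_entryTime_mem_periodicPts (f : α → α) (x : α) :
    f^[entryTime f x] x ∈ periodicPts f := by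
  classical
  exact Nat.find_spec (exists_iterate_mem_periodicPts f x)

theorem iterate_notMem_periodicPts_of_lt_entryTime {n : ℕ} (hn : n < entryTime f x) :
    f^[n] x ∉ periodicPts f := by
  classical
  exact Nat.find_min (exists_iterate_mem_periodicPts f x) hn

theorem entryTime_eq_of_iterate_mem_periodicPts {k : ℕ} (hk : f^[k] x ∈ periodicPts f)
    (hlt : ∀ n < k, f^[n] x ∉ periodicPts f) : entryTime f x = k := by
  classical
  exact (Nat.find_eq_iff _).mpr ⟨hk, hlt⟩

noncomputable def tailPath (f : α → α) (x : α) : List α :=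
  List.iterate f x (entryTime f x)

/-- The points of the forward orbit of `x`, each listed once: the tail, then the cycle. -/
noncomputable def orbitList (f : α → α) (x : α) : List α :=
  List.iterate f x (entryTime f x + minimalPeriod f (f^[entryTime f x] x))

theorem orbitList_eq_tailPath_append (f : α → α) (x : α) :
    orbitList f x = tailPath f x ++
      List.iterate f (f^[entryTime f x] x) (minimalPeriod f (f^[entryTime f x] x)) :=
  List.iterate_add ..

theorem injOn_iterate_Iio_entryTime_add_minimalPeriod (f : α → α) (x : α) :
    InjOn (f^[·] x) (Iio (entryTime f x + minimalPeriod f (f^[entryTime f x] x))) := by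
  intro a ha b hb hab
  simp only [mem_Iio] at ha hb
  by_contra hne
  wlog hlt : a < b generalizing a b
  · exact this hab.symm hb ha (Ne.symm hne) (by omega)
  by_cases hak : a < entryTime f x
  · refine iterate_notMem_periodicPts_of_lt_entryTime hak (mk_mem_periodicPts (n := b - a)
      (by omega) ?_)
    rw [IsPeriodicPt, IsFixedPt, ← iterate_add_apply, Nat.sub_add_cancel hlt.le]
    exact hab.symm
  · have hcycle : f^[a - entryTime f x] (f^[entryTime f x] x) =
        f^[b - entryTime f x] (f^[entryTime f x] x) := by
      rwa [← iterate_add_apply, ← iterate_add_apply, Nat.sub_add_cancel (not_lt.mp hak),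
        Nat.sub_add_cancel (by omega : entryTime f x ≤ b)]
    have := iterate_injOn_Iio_minimalPeriod (f := f) (x := f^[entryTime f x] x)
      (show a - entryTime f x < _ by omega) (show b - entryTime f x < _ by omega) hcycle
    omega

theorem nodup_orbitList (f : α → α) (x : α) : (orbitList f x).Nodup := by
  rw [orbitList, ← List.range_map_iterate]
  refine (List.nodup_range).map_on fun a ha b hb hab => ?_
  exact injOn_iterate_Iio_entryTime_add_minimalPeriod f x
    (List.mem_range.mp ha) (List.mem_range.mp hb) hab

theorem nodup_tailPath (f : α → α) (x : α) : (tailPath f x).Nodup := by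
  have := nodup_orbitList f x
  rw [orbitList_eq_tailPath_append] at this
  exact this.of_append_left

theorem notMem_periodicPts_of_mem_tailPath {y : α} (hy : y ∈ tailPath f x) :
    y ∉ periodicPts f := by
  obtain ⟨n, hn, rfl⟩ := List.mem_iterate.mp hy
  exact iterate_notMem_periodicPts_of_lt_entryTime hn

end Orbit

section Straighten

variable [Finite α] {f : α → α} {x v : α}

open Classical in
noncomputable def tailSet (f : α → α) (v : α) : Finset α :=
  (tailPath f v).toFinset

theorem mem_tailSet : x ∈ tailSet f v ↔ x ∈ tailPath f v := by
  classical
  simp [tailSet]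

theorem length_toList_tailSet : (tailSet f v).toList.length = entryTime f v := by
  classical
  rw [Finset.length_toList, tailSet, List.toFinset_card_of_nodup (nodup_tailPath f v), tailPath,
    List.length_iterate]

open Classical in
/-- The tail of `v` is relabelled along `(tailSet f v).toList`: this enumeration depends only on
the set of tail points, which is what lets `lassoMap` below recover `f`. -/
noncomputable def straighten (f : α → α) (v : α) (x : α) : α :=
  if x ∈ periodicPts f then x
  else if x ∈ tailSet f v then f^[(tailSet f v).toList.idxOf x] v
  else f x

theorem straighten_of_mem_periodicPts (hx : x ∈ periodicPts f) : straighten f v x = x := by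
  rw [straighten, if_pos hx]

theorem straighten_of_notMem (hx : x ∉ periodicPts f) (hx' : x ∉ tailSet f v) :
    straighten f v x = f x := by
  rw [straighten, if_neg hx, if_neg hx']

theorem straighten_getElem_toList_tailSet {i : ℕ} (hi : i < (tailSet f v).toList.length) :
    straighten f v (tailSet f v).toList[i] = f^[i] v := by
  classical
  have hmem : (tailSet f v).toList[i] ∈ tailSet f v := Finset.mem_toList.mp (List.getElem_mem hi)
  rw [straighten, if_neg (notMem_periodicPts_of_mem_tailPath (mem_tailSet.mp hmem)), if_pos hmem,
    (Finset.nodup_toList _).idxOf_getElem]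

theorem map_straighten_toList_tailSet :
    (tailSet f v).toList.map (straighten f v) = tailPath f v := by
  refine List.ext_getElem (by rw [List.length_map, length_toList_tailSet, tailPath,
    List.length_iterate]) fun i hi _ => ?_
  rw [List.getElem_map, straighten_getElem_toList_tailSet]
  simp [tailPath]

theorem mapsTo_straighten_tailSet :
    MapsTo (straighten f v) (tailSet f v : Set α) (tailSet f v) := by
  intro x hx
  obtain ⟨i, hi, rfl⟩ := List.getElem_of_mem (Finset.mem_toList.mpr hx)
  rw [straighten_getElem_toList_tailSet, Finset.mem_coe, mem_tailSet, tailPath, List.mem_iterate]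
  exact ⟨i, by rwa [length_toList_tailSet] at hi, rfl⟩

theorem injOn_straighten_tailSet : InjOn (straighten f v) (tailSet f v : Set α) := by
  intro x hx y hy hxy
  obtain ⟨i, hi, rfl⟩ := List.getElem_of_mem (Finset.mem_toList.mpr hx)
  obtain ⟨i', hi', rfl⟩ := List.getElem_of_mem (Finset.mem_toList.mpr hy)
  rw [straighten_getElem_toList_tailSet, straighten_getElem_toList_tailSet] at hxy
  have hlt : ∀ {n}, n < (tailSet f v).toList.length →
      n ∈ Iio (entryTime f v + minimalPeriod f (f^[entryTime f v] v)) := fun h => by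
    rw [length_toList_tailSet] at h
    exact mem_Iio.mpr (by omega)
  congr 1
  exact injOn_iterate_Iio_entryTime_add_minimalPeriod f v (hlt hi) (hlt hi') hxy

theorem periodicPts_straighten :
    periodicPts (straighten f v) = periodicPts f ∪ tailSet f v := by
  have hmaps : MapsTo (straighten f v) (periodicPts f ∪ tailSet f v)
      (periodicPts f ∪ tailSet f v) := by
    rintro x (hx | hx)
    · exact Or.inl ((straighten_of_mem_periodicPts hx).symm ▸ hx)
    · exact Or.inr (mapsTo_straighten_tailSet hx)
  refine Subset.antisymm (fun x hx => ?_) (union_subset (fun x hx => ?_) ?_)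
  · have heq : EqOn (straighten f v) f (periodicPts f ∪ tailSet f v)ᶜ := fun y hy => by
      simp only [mem_compl_iff, mem_union, not_or, Finset.mem_coe] at hy
      exact straighten_of_notMem hy.1 hy.2
    obtain ⟨n, hn⟩ := exists_iterate_mem_of_eqOn_compl heq subset_union_left x
    exact mem_of_iterate_mem_of_mem_periodicPts hmaps hx hn
  · exact mk_mem_periodicPts one_pos (straighten_of_mem_periodicPts hx)
  · exact subset_periodicPts_of_mapsTo_of_injOn (toFinite _) mapsTo_straighten_tailSet
      injOn_straighten_tailSet

end Straighten

noncomputable def cycleEnum [Finite α] (ℓ : ℕ) (f : α → α) (v : α) : Fin ℓ → α :=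
  fun i => f^[i] (f^[entryTime f v] v)

section LassoMap

variable [Fintype α] {ℓ : ℕ} {j : Fin ℓ → α} {g : α → α} {x : α}

open Classical in
noncomputable def offCyclePts (j : Fin ℓ → α) (g : α → α) : Finset α :=
  {x | x ∈ periodicPts g ∧ x ∉ range j}

/-- `straighten f v` sends the `i`-th point of the enumeration of the tail set to `f^[i] v`, so
applying `g` to the enumeration recovers the tail in order. -/
noncomputable def lassoPath (j : Fin ℓ → α) (g : α → α) : List α :=
  (offCyclePts j g).toList.map g

noncomputable def lassoSpine (j : Fin ℓ → α) (g : α → α) : List α :=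
  lassoPath j g ++ List.ofFn j

theorem mem_offCyclePts : x ∈ offCyclePts j g ↔ x ∈ periodicPts g ∧ x ∉ range j := by
  classical
  simp [offCyclePts]

theorem injOn_offCyclePts : InjOn g (offCyclePts j g : Set α) :=
  (bijOn_periodicPts g).injOn.mono fun _ hx => (mem_offCyclePts.mp hx).1

theorem mapsTo_offCyclePts (hg : ∀ i, g (j i) = j i) :
    MapsTo g (offCyclePts j g : Set α) (offCyclePts j g) := by
  intro x hx
  have hx := mem_offCyclePts.mp hx
  refine mem_offCyclePts.mpr ⟨(bijOn_periodicPts g).mapsTo hx.1, ?_⟩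
  rintro ⟨i, hi⟩
  have hfix : j i ∈ periodicPts g := mk_mem_periodicPts one_pos (hg i)
  exact hx.2 ⟨i, (bijOn_periodicPts g).injOn hfix hx.1 (by rw [hg i, hi])⟩

theorem nodup_lassoPath : (lassoPath j g).Nodup :=
  (Finset.nodup_toList _).map_on fun _ hx _ hy hxy =>
    injOn_offCyclePts (Finset.mem_toList.mp hx) (Finset.mem_toList.mp hy) hxy

theorem mem_lassoPath (hg : ∀ i, g (j i) = j i) : x ∈ lassoPath j g ↔ x ∈ offCyclePts j g := by
  have hbij := ((toFinite _).injOn_iff_bijOn_of_mapsTo (mapsTo_offCyclePts hg)).mp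
    injOn_offCyclePts
  simp only [lassoPath, List.mem_map, Finset.mem_toList]
  exact ⟨fun ⟨y, hy, hyx⟩ => hyx ▸ hbij.mapsTo hy, fun hx => hbij.surjOn hx⟩

theorem nodup_lassoSpine (hj : Injective j) (hg : ∀ i, g (j i) = j i) :
    (lassoSpine j g).Nodup := by
  refine List.nodup_append.mpr ⟨nodup_lassoPath, List.nodup_ofFn.mpr hj, ?_⟩
  rintro x hx _ hy rfl
  exact ((mem_offCyclePts.mp ((mem_lassoPath hg).mp hx)).2) ((List.mem_ofFn' _ _).mp hy)

variable [NeZero ℓ]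

noncomputable def lassoMap (j : Fin ℓ → α) (g : α → α) : α → α :=
  lasso (lassoSpine j g) (j 0) g

noncomputable def lassoStart (j : Fin ℓ → α) (g : α → α) : α :=
  (lassoSpine j g).getD 0 (j 0)

variable (hj : Injective j) (hg : ∀ i, g (j i) = j i)
include hj hg

theorem iterate_lassoMap_lassoStart {i : ℕ} (hi : i ≤ (lassoSpine j g).length) :
    (lassoMap j g)^[i] (lassoStart j g) = (lassoSpine j g).getD i (j 0) :=
  iterate_lasso_getD (nodup_lassoSpine hj hg) _ _ hi

theorem iterate_lassoMap_lassoStart_of_lt {i : ℕ} (hi : i < (lassoPath j g).length) :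
    (lassoMap j g)^[i] (lassoStart j g) = (lassoPath j g)[i] := by
  rw [iterate_lassoMap_lassoStart hj hg (by simp [lassoSpine]; omega), lassoSpine,
    List.getD_append _ _ _ _ hi, List.getD_eq_getElem]

theorem iterate_lassoMap_lassoStart_add (i : Fin ℓ) :
    (lassoMap j g)^[(lassoPath j g).length + i] (lassoStart j g) = j i := by
  rw [iterate_lassoMap_lassoStart hj hg (by simp [lassoSpine]), lassoSpine,
    List.getD_append_right _ _ _ _ (by omega), Nat.add_sub_cancel_left,
    List.getD_eq_getElem _ _ (by simp), List.getElem_ofFn]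

theorem iterate_lassoMap_lassoStart_length :
    (lassoMap j g)^[(lassoPath j g).length] (lassoStart j g) = j 0 := by
  simpa using iterate_lassoMap_lassoStart_add hj hg 0

theorem iterate_lassoMap_lassoStart_length_add :
    (lassoMap j g)^[(lassoPath j g).length + ℓ] (lassoStart j g) = j 0 := by
  rw [iterate_lassoMap_lassoStart hj hg (by simp [lassoSpine]), lassoSpine,
    List.getD_eq_default _ _ (by simp)]

theorem iterate_lassoMap_j_zero (i : Fin ℓ) : (lassoMap j g)^[i] (j 0) = j i := by
  rw [← iterate_lassoMap_lassoStart_length hj hg, ← iterate_add_apply, add_comm, iterate_lassoMap_lassoStart_add hj hg]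

theorem isPeriodicPt_lassoMap : IsPeriodicPt (lassoMap j g) ℓ (j 0) := by
  rw [IsPeriodicPt, IsFixedPt]
  conv_lhs => rw [← iterate_lassoMap_lassoStart_length hj hg]
  rw [← iterate_add_apply, add_comm, iterate_lassoMap_lassoStart_length_add hj hg]

theorem exists_iterate_lassoMap_eq (x : α) : ∃ n, (lassoMap j g)^[n] x = j 0 := by
  have heq : EqOn (lassoMap j g) g {y | y ∈ lassoSpine j g}ᶜ := fun y hy =>
    lasso_of_notMem _ _ hy
  have hper : periodicPts g ⊆ {y | y ∈ lassoSpine j g} := by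
    intro y hy
    by_cases hj' : y ∈ range j
    · exact List.mem_append_right _ ((List.mem_ofFn' _ _).mpr hj')
    · exact List.mem_append_left _ ((mem_lassoPath hg).mpr (mem_offCyclePts.mpr ⟨hy, hj'⟩))
  obtain ⟨n, hn⟩ := exists_iterate_mem_of_eqOn_compl heq hper x
  obtain ⟨i, hi, hin⟩ := List.getElem_of_mem hn
  have hlen : (lassoSpine j g).length = (lassoPath j g).length + ℓ := by simp [lassoSpine]
  refine ⟨(lassoPath j g).length + ℓ - i + n, ?_⟩
  rw [iterate_add_apply, ← hin, ← List.getD_eq_getElem _ (j 0),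
    ← iterate_lassoMap_lassoStart hj hg hi.le, ← iterate_add_apply, Nat.sub_add_cancel (by omega),
    iterate_lassoMap_lassoStart_length_add hj hg]

theorem hasConnectedGraph_lassoMap : HasConnectedGraph (lassoMap j g) := fun x y => by
  obtain ⟨m, hm⟩ := exists_iterate_lassoMap_eq hj hg x
  obtain ⟨n, hn⟩ := exists_iterate_lassoMap_eq hj hg y
  exact ⟨m, n, hm.trans hn.symm⟩

theorem periodicPts_lassoMap : periodicPts (lassoMap j g) = range j := by
  have hper := isPeriodicPt_lassoMap hj hg
  rw [(hasConnectedGraph_lassoMap hj hg).periodicPts_eq_range_iterate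
    (mk_mem_periodicPts (Nat.pos_of_ne_zero (NeZero.ne ℓ)) hper)]
  refine Subset.antisymm ?_ fun _ ⟨i, hi⟩ => ⟨i, hi ▸ iterate_lassoMap_j_zero hj hg i⟩
  rintro _ ⟨n, rfl⟩
  refine ⟨⟨n % ℓ, Nat.mod_lt _ (Nat.pos_of_ne_zero (NeZero.ne ℓ))⟩, ?_⟩
  exact (iterate_lassoMap_j_zero hj hg _).symm.trans (hper.iterate_mod_apply n)

theorem entryTime_lassoMap :
    entryTime (lassoMap j g) (lassoStart j g) = (lassoPath j g).length := by
  refine entryTime_eq_of_iterate_mem_periodicPts ?_ fun n hn => ?_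
  · rw [iterate_lassoMap_lassoStart_length hj hg, periodicPts_lassoMap hj hg]
    exact mem_range_self 0
  · rw [iterate_lassoMap_lassoStart_of_lt hj hg hn, periodicPts_lassoMap hj hg]
    exact (mem_offCyclePts.mp ((mem_lassoPath hg).mp (List.getElem_mem hn))).2

theorem tailPath_lassoMap : tailPath (lassoMap j g) (lassoStart j g) = lassoPath j g := by
  refine List.ext_getElem (by rw [tailPath, List.length_iterate, entryTime_lassoMap hj hg])
    fun i hi hi' => ?_
  simp only [tailPath, List.getElem_iterate]
  exact iterate_lassoMap_lassoStart_of_lt hj hg hi'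

theorem tailSet_lassoMap : tailSet (lassoMap j g) (lassoStart j g) = offCyclePts j g := by
  ext x
  rw [mem_tailSet, tailPath_lassoMap hj hg, mem_lassoPath hg]

theorem cycleEnum_lassoMap : cycleEnum ℓ (lassoMap j g) (lassoStart j g) = j := by
  funext i
  rw [cycleEnum, ← iterate_add_apply, add_comm, entryTime_lassoMap hj hg,
    iterate_lassoMap_lassoStart_add hj hg]

theorem straighten_lassoMap : straighten (lassoMap j g) (lassoStart j g) = g := by
  funext x
  by_cases hper : x ∈ range j
  · obtain ⟨i, rfl⟩ := hper
    rw [straighten_of_mem_periodicPts (by rw [periodicPts_lassoMap hj hg]; exact mem_range_self i),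
      hg]
  by_cases htail : x ∈ tailSet (lassoMap j g) (lassoStart j g)
  · obtain ⟨i, hi, rfl⟩ := List.getElem_of_mem (Finset.mem_toList.mpr htail)
    rw [straighten_getElem_toList_tailSet]
    simp only [tailSet_lassoMap hj hg] at hi ⊢
    rw [iterate_lassoMap_lassoStart_of_lt hj hg (by simpa [lassoPath] using hi)]
    simp only [lassoPath, List.getElem_map]
  · rw [straighten_of_notMem (by rwa [periodicPts_lassoMap hj hg]) htail, lassoMap,
      lasso_of_notMem]
    rw [tailSet_lassoMap hj hg, ← mem_lassoPath hg] at htail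
    simpa [lassoSpine, htail] using hper

end LassoMap

section Encode

variable [Fintype α] {ℓ : ℕ} {f : α → α} {v : α}
  (hf : HasConnectedGraph f) (hℓ : (periodicPts f).ncard = ℓ)
include hf hℓ

theorem minimalPeriod_iterate_entryTime : minimalPeriod f (f^[entryTime f v] v) = ℓ :=
  hℓ ▸ hf.minimalPeriod_eq_ncard (iterate_entryTime_mem_periodicPts f v)

theorem injective_cycleEnum : Injective (cycleEnum ℓ f v) := by
  obtain rfl := minimalPeriod_iterate_entryTime (v := v) hf hℓ
  exact injective_iterate_fin_minimalPeriod f _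

theorem range_cycleEnum : range (cycleEnum ℓ f v) = periodicPts f := by
  obtain rfl := minimalPeriod_iterate_entryTime (v := v) hf hℓ
  rw [hf.periodicPts_eq_range_iterate (iterate_entryTime_mem_periodicPts f v)]
  exact range_iterate_fin_minimalPeriod (iterate_entryTime_mem_periodicPts f v)

theorem offCyclePts_cycleEnum_straighten :
    offCyclePts (cycleEnum ℓ f v) (straighten f v) = tailSet f v := by
  ext x
  rw [mem_offCyclePts, periodicPts_straighten, range_cycleEnum hf hℓ]
  refine ⟨fun ⟨hx, hx'⟩ => hx.resolve_left hx', fun hx => ⟨Or.inr hx, ?_⟩⟩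
  exact notMem_periodicPts_of_mem_tailPath (mem_tailSet.mp hx)

theorem lassoSpine_cycleEnum_straighten :
    lassoSpine (cycleEnum ℓ f v) (straighten f v) = orbitList f v := by
  rw [lassoSpine, lassoPath, offCyclePts_cycleEnum_straighten hf hℓ,
    map_straighten_toList_tailSet, orbitList_eq_tailPath_append,
    minimalPeriod_iterate_entryTime hf hℓ]
  congr 1
  exact List.ext_getElem (by simp) fun i _ _ => by simp [cycleEnum]

variable [NeZero ℓ]

theorem lassoMap_cycleEnum_straighten : lassoMap (cycleEnum ℓ f v) (straighten f v) = f := by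
  funext x
  rw [lassoMap, lassoSpine_cycleEnum_straighten hf hℓ]
  by_cases hx : x ∈ orbitList f v
  · have hz : cycleEnum ℓ f v 0 =
        f^[entryTime f v + minimalPeriod f (f^[entryTime f v] v)] v := by
      rw [add_comm, iterate_add_apply, iterate_minimalPeriod]
      rfl
    rw [hz]
    exact lasso_iterate_eq (nodup_orbitList f v) _ hx
  · rw [lasso_of_notMem _ _ hx]
    rw [orbitList_eq_tailPath_append, List.mem_append, not_or] at hx
    refine straighten_of_notMem (fun hper => hx.2 ?_) (fun htail => hx.1 (mem_tailSet.mp htail))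
    rw [← range_cycleEnum (v := v) hf hℓ] at hper
    obtain ⟨i, rfl⟩ := hper
    rw [minimalPeriod_iterate_entryTime hf hℓ]
    exact List.mem_iterate.mpr ⟨i, i.isLt, rfl⟩

theorem lassoStart_cycleEnum_straighten : lassoStart (cycleEnum ℓ f v) (straighten f v) = v := by
  have hpos : 0 < (orbitList f v).length := by
    rw [orbitList, List.length_iterate, minimalPeriod_iterate_entryTime hf hℓ]
    exact Nat.add_pos_right _ (Nat.pos_of_ne_zero (NeZero.ne ℓ))
  rw [lassoStart, lassoSpine_cycleEnum_straighten hf hℓ, List.getD_eq_getElem _ _ hpos]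
  simp [orbitList]

end Encode

variable (α) in
noncomputable def connectedMapsProdEquiv [Fintype α] (ℓ : ℕ) [NeZero ℓ] :
    {f : α → α // HasConnectedGraph f ∧ (periodicPts f).ncard = ℓ} × α ≃
      Σ j : Fin ℓ ↪ α, {g : α → α // ∀ i, g (j i) = j i} where
  toFun p :=
    ⟨⟨cycleEnum ℓ p.1 p.2, injective_cycleEnum p.1.2.1 p.1.2.2⟩, straighten p.1 p.2,
      fun i => straighten_of_mem_periodicPts
        ((range_cycleEnum p.1.2.1 p.1.2.2).subset (mem_range_self i))⟩
  invFun q :=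
    (⟨lassoMap q.1 q.2, hasConnectedGraph_lassoMap q.1.injective q.2.2, by
      rw [periodicPts_lassoMap q.1.injective q.2.2, ncard_range_of_injective q.1.injective,
        Nat.card_fin]⟩, lassoStart q.1 q.2)
  left_inv p := Prod.ext (Subtype.ext (lassoMap_cycleEnum_straighten p.1.2.1 p.1.2.2))
    (lassoStart_cycleEnum_straighten p.1.2.1 p.1.2.2)
  right_inv q := Sigma.subtype_ext (DFunLike.ext' (cycleEnum_lassoMap q.1.injective q.2.2))
    (straighten_lassoMap q.1.injective q.2.2)

theorem card_maps_fixing_range [Fintype α] {ℓ : ℕ} (j : Fin ℓ ↪ α) :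
    Nat.card {g : α → α // ∀ i, g (j i) = j i} = Fintype.card α ^ (Fintype.card α - ℓ) := by
  classical
  have hfix : {g : α → α // ∀ i, g (j i) = j i} ≃
      {g : α → α // g ∘ Subtype.val = (Subtype.val : range j → α)} :=
    Equiv.subtypeEquivRight fun g => by
      simp [funext_iff]
  rw [Nat.card_congr (hfix.trans (Equiv.subtypePreimage _ _)), Nat.card_fun,
    Nat.card_eq_fintype_card, Nat.card_eq_fintype_card, Fintype.card_subtype_compl,
    Set.card_range_of_injective j.injective, Fintype.card_fin]

variable (α) in
theorem card_connectedMaps_mul_card [Fintype α] (ℓ : ℕ) [NeZero ℓ] :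
    Nat.card {f : α → α // HasConnectedGraph f ∧ (periodicPts f).ncard = ℓ} * Fintype.card α =
      (Fintype.card α).descFactorial ℓ * Fintype.card α ^ (Fintype.card α - ℓ) := by
  classical
  rw [← Nat.card_eq_fintype_card (α := α), ← Nat.card_prod,
    Nat.card_congr (connectedMapsProdEquiv α ℓ), Nat.card_sigma,
    Finset.sum_congr rfl fun j _ => card_maps_fixing_range j, Finset.sum_const, Finset.card_univ,
    smul_eq_mul, Fintype.card_embedding_eq, Fintype.card_fin, Nat.card_eq_fintype_card]

open Nat in
theorem div_pow_self_eq_of_mul_eq_descFactorial {M ℓ N : ℕ} (hℓM : ℓ ≤ M)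
    (hN : N * M = M.descFactorial ℓ * M ^ (M - ℓ)) :
    (N : ℝ) / (M : ℝ) ^ M = (M ! : ℝ) / ((M - ℓ)! * (M : ℝ) ^ (ℓ + 1)) := by
  have hM : (M : ℝ) ≠ 0 := by
    rintro hM
    obtain rfl : M = 0 := by exact_mod_cast hM
    obtain rfl : ℓ = 0 := by omega
    simp at hN
  have hNR : (N : ℝ) * M = M.descFactorial ℓ * (M : ℝ) ^ (M - ℓ) := by exact_mod_cast hN
  have hfact : ((M - ℓ)! : ℝ) * M.descFactorial ℓ = M ! := by
    exact_mod_cast factorial_mul_descFactorial hℓM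
  have hpow : (M : ℝ) ^ (M - ℓ) * (M : ℝ) ^ ℓ = (M : ℝ) ^ M := by
    rw [← pow_add, Nat.sub_add_cancel hℓM]
  rw [div_eq_div_iff (pow_ne_zero _ hM) (mul_ne_zero (by positivity) (pow_ne_zero _ hM))]
  linear_combination ((M - ℓ)! * (M : ℝ) ^ ℓ) * hNR + ((M : ℝ) ^ (M - ℓ) * (M : ℝ) ^ ℓ) * hfact +
    (M ! : ℝ) * hpow

theorem stmt3_general (M ℓ : ℕ) (hℓ : 1 ≤ ℓ) (hℓM : ℓ ≤ M) :
    (Set.ncard {f : Fin M → Fin M |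
        (∀ x y : Fin M, ∃ m n : ℕ, f^[m] x = f^[n] y) ∧
        Set.ncard {x : Fin M | ∃ n : ℕ, 1 ≤ n ∧ f^[n] x = x} = ℓ} : ℝ)
        / (M : ℝ) ^ M
      = (Nat.factorial M : ℝ) /
          ((Nat.factorial (M - ℓ) : ℝ) * (M : ℝ) ^ (ℓ + 1)) := by
  have : NeZero ℓ := ⟨by omega⟩
  have hcount := card_connectedMaps_mul_card (Fin M) ℓ
  rw [Fintype.card_fin] at hcount
  rw [← Nat.card_coe_set_eq]
  exact div_pow_self_eq_of_mul_eq_descFactorial hℓM hcount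

/-- For a uniformly random `f : Fin M → Fin M`, the probability that the
functional graph is connected and `f` has exactly `ℓ` periodic points equals
`M! / ((M-ℓ)! * M^(ℓ+1))`. -/
theorem stmt3 (M ℓ : ℕ) (hM : 1 ≤ M) (hℓ : 1 ≤ ℓ) (hℓM : ℓ ≤ M) :
    (Set.ncard {f : Fin M → Fin M |
        (∀ x y : Fin M, ∃ m n : ℕ, f^[m] x = f^[n] y) ∧
        Set.ncard {x : Fin M | ∃ n : ℕ, 1 ≤ n ∧ f^[n] x = x} = ℓ} : ℝ)
        / (M : ℝ) ^ M
      = (Nat.factorial M : ℝ) /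
          ((Nat.factorial (M - ℓ) : ℝ) * (M : ℝ) ^ (ℓ + 1)) :=
  stmt3_general M ℓ hℓ hℓM
end

section
/- Let a > −1 be a real number and for each M ≥ 1 set Z_M = Σ_{k=1}^M k^a. Then lim_{M→∞} Σ_{k=1}^M (k^a/Z_M) (1 − k^a/Z_M)^{M−1} = (a+1) ∫_0^1 x^a e^{−(a+1)x^a} dx. Consequently, in the algebraic fitness model φ(i) = i^a the average number of introverts converges as M → ∞ to A(a) = (a+1) ∫_0^1 x^a e^{−(a+1)x^a} dx. -/
/-!
With `p_M(k) = k^a / Z_M`, the sum equals `∫₀¹ M p_M(⌈Mx⌉) (1 - p_M(⌈Mx⌉))^(M-1) dx`, the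
integrand being a step function. The same Riemann-sum representation together with dominated
convergence gives `Z_M ~ M^(a+1) / (a+1)`, hence `M p_M(⌈Mx⌉) → (a+1) x^a` and
`(1 - p_M(⌈Mx⌉))^(M-1) → exp(-(a+1) x^a)` pointwise. All integrands are bounded by
`C (x^a + 1)`, integrable on `(0, 1]` because `a > -1`, so dominated convergence applies.
-/

open Filter Finset Real MeasureTheory Topology

lemma natCeil_eqOn_Ioc (i : ℕ) :
    Set.EqOn (fun y : ℝ => ⌈y⌉₊) (fun _ => i + 1) (Set.Ioc (i : ℝ) (i + 1)) := fun y hy => by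
  rw [Nat.ceil_eq_iff (Nat.succ_ne_zero i)]
  push_cast
  exact ⟨by linarith [hy.1], hy.2⟩

lemma intervalIntegrable_comp_natCeil (q : ℕ → ℝ) (i : ℕ) :
    IntervalIntegrable (fun y : ℝ => q ⌈y⌉₊) volume i (i + 1) := by
  rw [intervalIntegrable_iff_integrableOn_Ioc_of_le (by linarith)]
  exact (integrableOn_congr_fun (fun y hy => congrArg q (natCeil_eqOn_Ioc i hy))
    measurableSet_Ioc).mpr (integrableOn_const measure_Ioc_lt_top.ne)

lemma integral_comp_natCeil_Ioc (q : ℕ → ℝ) (i : ℕ) :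
    ∫ y in (i : ℝ)..(i + 1), q ⌈y⌉₊ = q (i + 1) := by
  rw [intervalIntegral.integral_of_le (by linarith),
    setIntegral_congr_fun measurableSet_Ioc (fun y hy => congrArg q (natCeil_eqOn_Ioc i hy)),
    setIntegral_const, Real.volume_real_Ioc_of_le (by linarith)]
  simp

lemma integral_comp_natCeil (q : ℕ → ℝ) (n : ℕ) :
    ∫ y in (0 : ℝ)..n, q ⌈y⌉₊ = ∑ k ∈ Icc 1 n, q k := by
  have h := intervalIntegral.sum_integral_adjacent_intervals (a := fun i : ℕ => (i : ℝ))
    (n := n) (fun i _ => by exact_mod_cast intervalIntegrable_comp_natCeil q i)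
  simp only [Nat.cast_zero, Nat.cast_add, Nat.cast_one, integral_comp_natCeil_Ioc] at h
  rw [← h, Finset.range_eq_Ico, Finset.sum_Ico_add', zero_add, Finset.Ico_add_one_right_eq_Icc]

lemma sum_Icc_eq_integral_natCeil_mul (q : ℕ → ℝ) (M : ℕ) :
    ∑ k ∈ Icc 1 M, q k = ∫ x in (0 : ℝ)..1, M * q ⌈M * x⌉₊ := by
  rw [intervalIntegral.integral_const_mul,
    intervalIntegral.mul_integral_comp_mul_left (f := fun y => q ⌈y⌉₊), mul_zero, mul_one,
    integral_comp_natCeil]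

theorem tendsto_sum_Icc_of_dominated {q : ℕ → ℕ → ℝ} {f g : ℝ → ℝ}
    (hg : IntervalIntegrable g volume 0 1)
    (hbound : ∀ᶠ M : ℕ in atTop, ∀ x ∈ Set.Ioc (0 : ℝ) 1, ‖(M : ℝ) * q M ⌈(M : ℝ) * x⌉₊‖ ≤ g x)
    (hlim : ∀ x ∈ Set.Ioc (0 : ℝ) 1,
      Tendsto (fun M : ℕ => (M : ℝ) * q M ⌈(M : ℝ) * x⌉₊) atTop (𝓝 (f x))) :
    Tendsto (fun M => ∑ k ∈ Icc 1 M, q M k) atTop (𝓝 (∫ x in (0 : ℝ)..1, f x)) := by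
  simp only [sum_Icc_eq_integral_natCeil_mul]
  refine intervalIntegral.tendsto_integral_filter_of_dominated_convergence g
    (.of_forall fun M => ?_) ?_ hg (.of_forall fun x hx => ?_)
  · exact (measurable_const.mul (measurable_from_top.comp
      (Nat.measurable_ceil.comp (measurable_const.mul measurable_id)))).aestronglyMeasurable
  · filter_upwards [hbound] with M hM
    exact .of_forall fun x hx => hM x (by rwa [Set.uIoc_of_le zero_le_one] at hx)
  · exact hlim x (by rwa [Set.uIoc_of_le zero_le_one] at hx)

lemma tendsto_natCeil_mul_div {x : ℝ} (hx : 0 ≤ x) :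
    Tendsto (fun M : ℕ => (⌈M * x⌉₊ : ℝ) / M) atTop (𝓝 x) := by
  simpa only [Function.comp_def, mul_comm] using
    (tendsto_nat_ceil_mul_div_atTop hx).comp tendsto_natCast_atTop_atTop

lemma natCeil_mul_mem_Icc {M : ℕ} (hM : 0 < M) {x : ℝ} (hx : x ∈ Set.Ioc (0 : ℝ) 1) :
    ⌈M * x⌉₊ ∈ Icc 1 M := by
  have hM' : (0 : ℝ) < M := by exact_mod_cast hM
  exact Finset.mem_Icc.mpr ⟨Nat.ceil_pos.mpr (mul_pos hM' hx.1),
    Nat.ceil_le.mpr (mul_le_of_le_one_right hM'.le hx.2)⟩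

lemma natCeil_mul_div_mem_Icc {M : ℕ} (hM : 0 < M) {x : ℝ} (hx : x ∈ Set.Ioc (0 : ℝ) 1) :
    (⌈M * x⌉₊ : ℝ) / M ∈ Set.Icc x 1 := by
  have hM' : (0 : ℝ) < M := by exact_mod_cast hM
  rw [Set.mem_Icc, le_div_iff₀ hM', div_le_one hM', mul_comm]
  exact ⟨Nat.le_ceil _, by exact_mod_cast (Finset.mem_Icc.mp (natCeil_mul_mem_Icc hM hx)).2⟩

lemma rpow_le_rpow_add_one {x r : ℝ} (hx : 0 < x) (hr : r ∈ Set.Icc x 1) (a : ℝ) :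
    r ^ a ≤ x ^ a + 1 := by
  rcases le_or_gt 0 a with ha | ha
  · linarith [rpow_le_one (hx.le.trans hr.1) hr.2 ha, rpow_pos_of_pos hx a]
  · linarith [rpow_le_rpow_of_nonpos hx hr.1 ha.le]

lemma mul_rpow_div_rpow_add_one {x k : ℝ} (hx : 0 < x) (hk : 0 ≤ k) (a : ℝ) :
    x * (k ^ a / x ^ (a + 1)) = (k / x) ^ a := by
  rw [div_rpow hk hx.le, rpow_add_one hx.ne']
  field_simp

lemma one_sub_pow_pred_tendsto_exp {p : ℕ → ℝ} {c : ℝ}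
    (hc : Tendsto (fun n : ℕ => n * p n) atTop (𝓝 c)) :
    Tendsto (fun n => (1 - p n) ^ (n - 1)) atTop (𝓝 (exp (-c))) := by
  have hp : Tendsto p atTop (𝓝 0) := by
    have h := hc.mul (tendsto_inv_atTop_zero.comp tendsto_natCast_atTop_atTop)
    rw [mul_zero] at h
    refine h.congr' ?_
    filter_upwards [eventually_ne_atTop 0] with n hn
    simp only [Function.comp_apply]
    field_simp
  have hpow := Real.tendsto_one_add_pow_exp_of_tendsto (g := fun n => -p n) (t := -c)
    (by simpa using hc.neg)
  have hbase : Tendsto (fun n => 1 - p n) atTop (𝓝 1) := by simpa using hp.const_sub 1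
  refine ((hpow.div hbase one_ne_zero).congr' ?_).trans (by rw [div_one])
  filter_upwards [eventually_ge_atTop 1, hbase.eventually_ne one_ne_zero] with n hn hne
  rw [Pi.div_apply, ← sub_eq_add_neg, div_eq_iff hne, ← pow_succ, Nat.sub_add_cancel hn]

noncomputable def fitnessSum (a : ℝ) (M : ℕ) : ℝ := ∑ m ∈ Icc 1 M, (m : ℝ) ^ a

noncomputable def fitnessProb (a : ℝ) (M k : ℕ) : ℝ := (k : ℝ) ^ a / fitnessSum a M

section AlgebraicFitness

variable {a : ℝ} {M : ℕ}

lemma fitnessSum_pos (hM : 0 < M) : 0 < fitnessSum a M :=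
  sum_pos (fun m hm => rpow_pos_of_pos (by exact_mod_cast (Finset.mem_Icc.mp hm).1) a)
    ⟨1, Finset.mem_Icc.mpr ⟨le_rfl, hM⟩⟩

lemma fitnessProb_nonneg (k : ℕ) : 0 ≤ fitnessProb a M k := by
  unfold fitnessProb fitnessSum
  positivity

lemma fitnessProb_le_one {k : ℕ} (hk : k ∈ Icc 1 M) : fitnessProb a M k ≤ 1 :=
  div_le_one_of_le₀ (single_le_sum (f := fun m : ℕ => (m : ℝ) ^ a) (fun m _ => by positivity) hk)
    (by unfold fitnessSum; positivity)

lemma tendsto_fitnessSum_div_rpow (ha : -1 < a) :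
    Tendsto (fun M : ℕ => fitnessSum a M / (M : ℝ) ^ (a + 1)) atTop (𝓝 (1 / (a + 1))) := by
  have hint : ∫ x in (0 : ℝ)..1, x ^ a = 1 / (a + 1) := by
    rw [integral_rpow (Or.inl ha), one_rpow, zero_rpow (by linarith), sub_zero]
  simp only [fitnessSum, sum_div, ← hint]
  refine tendsto_sum_Icc_of_dominated (g := fun x => x ^ a + 1)
    ((intervalIntegral.intervalIntegrable_rpow' ha).add intervalIntegrable_const)
    ?_ fun x hx => ?_
  · filter_upwards [eventually_gt_atTop 0] with M hM x hx
    rw [mul_rpow_div_rpow_add_one (by exact_mod_cast hM) (Nat.cast_nonneg _) a,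
      norm_of_nonneg (rpow_nonneg (by positivity) a)]
    exact rpow_le_rpow_add_one hx.1 (natCeil_mul_div_mem_Icc hM hx) a
  · refine ((continuousAt_rpow_const x a (Or.inl hx.1.ne')).tendsto.comp
      (tendsto_natCeil_mul_div hx.1.le)).congr' ?_
    filter_upwards [eventually_gt_atTop 0] with M hM
    exact (mul_rpow_div_rpow_add_one (by exact_mod_cast hM) (Nat.cast_nonneg _) a).symm

lemma tendsto_rpow_div_fitnessSum (ha : -1 < a) :
    Tendsto (fun M : ℕ => (M : ℝ) ^ (a + 1) / fitnessSum a M) atTop (𝓝 (a + 1)) := by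
  simpa using (tendsto_fitnessSum_div_rpow ha).inv₀ (by simp; linarith)

lemma natCast_mul_fitnessProb (hM : 0 < M) (k : ℕ) :
    M * fitnessProb a M k = ((k : ℝ) / M) ^ a * ((M : ℝ) ^ (a + 1) / fitnessSum a M) := by
  have hM' : (0 : ℝ) < M := by exact_mod_cast hM
  rw [← mul_rpow_div_rpow_add_one hM' (Nat.cast_nonneg k) a, fitnessProb]
  field_simp [(rpow_pos_of_pos hM' (a + 1)).ne', (fitnessSum_pos hM).ne']

lemma tendsto_natCast_mul_fitnessProb_natCeil (ha : -1 < a) {x : ℝ} (hx : 0 < x) :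
    Tendsto (fun M : ℕ => M * fitnessProb a M ⌈(M : ℝ) * x⌉₊) atTop (𝓝 ((a + 1) * x ^ a)) := by
  rw [mul_comm]
  refine (((continuousAt_rpow_const x a (Or.inl hx.ne')).tendsto.comp
    (tendsto_natCeil_mul_div hx.le)).mul (tendsto_rpow_div_fitnessSum ha)).congr' ?_
  filter_upwards [eventually_gt_atTop 0] with M hM
  exact (natCast_mul_fitnessProb hM _).symm

lemma norm_natCast_mul_fitnessProb_mul_pow_le {C : ℝ}
    (hC : (M : ℝ) ^ (a + 1) / fitnessSum a M ≤ C) (hM : 0 < M) {x : ℝ}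
    (hx : x ∈ Set.Ioc (0 : ℝ) 1) :
    ‖M * (fitnessProb a M ⌈(M : ℝ) * x⌉₊ * (1 - fitnessProb a M ⌈(M : ℝ) * x⌉₊) ^ (M - 1))‖
      ≤ C * (x ^ a + 1) := by
  set p := fitnessProb a M ⌈(M : ℝ) * x⌉₊
  have hp0 : 0 ≤ p := fitnessProb_nonneg _
  have hp1 : p ≤ 1 := fitnessProb_le_one (natCeil_mul_mem_Icc hM hx)
  have hpow : (1 - p) ^ (M - 1) ≤ 1 := pow_le_one₀ (by linarith) (by linarith)
  rw [norm_of_nonneg (by positivity), ← mul_assoc]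
  calc M * p * (1 - p) ^ (M - 1) ≤ M * p := mul_le_of_le_one_right (by positivity) hpow
    _ = ((⌈(M : ℝ) * x⌉₊ : ℝ) / M) ^ a * ((M : ℝ) ^ (a + 1) / fitnessSum a M) :=
      natCast_mul_fitnessProb hM _
    _ ≤ (x ^ a + 1) * C :=
      mul_le_mul (rpow_le_rpow_add_one hx.1 (natCeil_mul_div_mem_Icc hM hx) a) hC
        (div_nonneg (by positivity) (fitnessSum_pos hM).le)
        (by linarith [rpow_pos_of_pos hx.1 a])
    _ = C * (x ^ a + 1) := mul_comm _ _

end AlgebraicFitness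

/-- Algebraic fitness model `φ(i) = i^a`, `a > -1`: the average number of
introverts converges to `A(a) = (a+1) ∫₀¹ x^a exp(-(a+1) x^a) dx`. -/
theorem stmt12 (a : ℝ) (ha : -1 < a) :
    Filter.Tendsto (fun M : ℕ =>
        ∑ k ∈ Finset.Icc 1 M,
          ((k : ℝ) ^ a / ∑ m ∈ Finset.Icc 1 M, (m : ℝ) ^ a) *
            (1 - (k : ℝ) ^ a / ∑ m ∈ Finset.Icc 1 M, (m : ℝ) ^ a) ^ (M - 1))
      Filter.atTop
      (nhds ((a + 1) * ∫ x in (0:ℝ)..1, x ^ a * Real.exp (-(a + 1) * x ^ a))) := by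
  rw [← intervalIntegral.integral_const_mul]
  refine tendsto_sum_Icc_of_dominated
    (q := fun M k => fitnessProb a M k * (1 - fitnessProb a M k) ^ (M - 1))
    (g := fun x => (a + 2) * (x ^ a + 1))
    (((intervalIntegral.intervalIntegrable_rpow' ha).add intervalIntegrable_const).const_mul _)
    ?_ fun x hx => ?_
  · filter_upwards [(tendsto_rpow_div_fitnessSum ha).eventually
      (eventually_le_nhds (by linarith : a + 1 < a + 2)), eventually_gt_atTop 0] with M hC hM
    exact fun x hx => norm_natCast_mul_fitnessProb_mul_pow_le hC hM hx
  · have hp := tendsto_natCast_mul_fitnessProb_natCeil ha hx.1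
    simpa only [mul_assoc, neg_mul] using hp.mul (one_sub_pow_pred_tendsto_exp hp)
end

section
/- Let M ≥ 1 and 1 ≤ k ≤ M. The number of ranking-compatible functions f : {1,…,M} → {1,…,M} such that exactly k elements x satisfy f(x) = M equals the number of permutations of {1,…,M} having exactly k cycles, i.e., the unsigned Stirling number of the first kind [M k]. Hence the degree distribution of the founder (the highest-rank individual M) in a uniformly random ranking-compatible map is Φ(k,M) = [M k]/M!. -/
/-!
Both counts satisfy the recurrence `c(n + 1, k) = n c(n, k) + c(n, k - 1)` of the unsigned
Stirling numbers of the first kind, since both families split as `Fin (n + 1) × (family of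
size n)` with the statistic going up by one at exactly one value of the first coordinate.
A ranking-compatible map on `Fin (n + 1)` is its value at `0` together with a
ranking-compatible map on the other `n` elements, and `0` is a new child of the founder
exactly when it is sent to the top. A permutation of `Fin (n + 1)` is `swap 0 p` times a
permutation fixing `0` (`Equiv.Perm.decomposeFin`): for `p = 0` this adds the fixed point `0`,
otherwise it inserts `0` into the cycle through `p` and the number of cycles is unchanged.
-/

open Finset Fintype

theorem card_filter_eq_of_equiv_prod {X Y P : Type*} [Fintype X] [Fintype Y] [Fintype P]
    [DecidableEq P] (e : X ≃ P × Y) (a : P) {sX : X → ℕ} {sY : Y → ℕ}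
    (h : ∀ p y, sX (e.symm (p, y)) = (if p = a then 1 else 0) + sY y) (k : ℕ) :
    #{x | sX x = k} = (card P - 1) * #{y | sY y = k} + #{y | sY y + 1 = k} := by
  have hfiber (p : P) : #{y | sX (e.symm (p, y)) = k} =
      if p = a then #{y | sY y + 1 = k} else #{y | sY y = k} := by
    split_ifs with hp <;> simp only [h, hp, if_true, if_false, add_comm, add_zero]
  calc #{x | sX x = k} = ∑ p, #{y | sX (e.symm (p, y)) = k} := by
        simp only [card_filter, ← Fintype.sum_prod_type',
          e.symm.sum_comp (fun x => if sX x = k then 1 else 0)]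
    _ = #{y | sY y + 1 = k} + ∑ p ∈ {a}ᶜ, #{y | sY y = k} := by
        rw [Fintype.sum_eq_add_sum_compl a, hfiber, if_pos rfl]
        congr 1
        exact sum_congr rfl fun p hp => by rw [hfiber, if_neg (by simpa using hp)]
    _ = (card P - 1) * #{y | sY y = k} + #{y | sY y + 1 = k} := by
        rw [sum_const, card_compl, card_singleton, smul_eq_mul, add_comm]

theorem card_filter_eq_stirlingFirst {X : ℕ → Type*} [∀ n, Fintype (X n)]
    (s : ∀ n, X n → ℕ) (h0 : card (X 0) = 1) (hs0 : ∀ x, s 0 x = 0)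
    (e : ∀ n, X (n + 1) ≃ Fin (n + 1) × X n) (a : ∀ n, Fin (n + 1))
    (he : ∀ n p y, s (n + 1) ((e n).symm (p, y)) = (if p = a n then 1 else 0) + s n y)
    (n k : ℕ) : #{x | s n x = k} = Nat.stirlingFirst n k := by
  induction n generalizing k with
  | zero => cases k <;> simp [hs0, h0]
  | succ n ih =>
    rw [card_filter_eq_of_equiv_prod (e n) (a n) (he n), Fintype.card_fin, Nat.add_sub_cancel, ih]
    cases k with
    | zero => cases n <;> simp
    | succ k => simp [ih, Nat.stirlingFirst_succ_succ]

namespace Equiv.Perm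

variable {α : Type*} [Fintype α] [DecidableEq α]

/-- `cycleType` only records the cycles of length at least two, so the fixed points are added. -/
def numCycles (σ : Perm α) : ℕ :=
  Multiset.card σ.cycleType + #{x | σ x = x}

theorem numCycles_eq_card_cycleType_add (σ : Perm α) :
    σ.numCycles = Multiset.card σ.cycleType + (card α - #σ.support) := by
  rw [numCycles, ← card_compl]
  congr 2
  ext x
  simp

theorem Disjoint.numCycles_mul_add_card {σ τ : Perm α} (h : Disjoint σ τ) :
    (σ * τ).numCycles + card α = σ.numCycles + τ.numCycles := by
  have := card_le_univ (σ * τ).support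
  simp only [numCycles_eq_card_cycleType_add, h.cycleType_mul, Multiset.card_add,
    h.card_support_mul] at this ⊢
  omega

theorem numCycles_extendDomain_add_card {β : Type*} [Fintype β] [DecidableEq β]
    {p : β → Prop} [DecidablePred p] (f : α ≃ Subtype p) (g : Perm α) :
    (g.extendDomain f).numCycles + card α = g.numCycles + card β := by
  have h₁ := card_le_univ g.support
  have h₂ := card_le_univ (g.extendDomain f).support
  simp only [numCycles_eq_card_cycleType_add, cycleType_extendDomain,
    card_support_extend_domain] at h₂ ⊢
  omega

theorem numCycles_formPerm_add_length {l : List α} (hl : l.Nodup) (hne : l ≠ []) :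
    l.formPerm.numCycles + l.length = card α + 1 := by
  have hcard := hl.length_le_card
  obtain ⟨x, rfl⟩ | hlen : (∃ x, l = [x]) ∨ 2 ≤ l.length := by
    rcases l with _ | ⟨x, _ | ⟨y, l⟩⟩
    · exact absurd rfl hne
    · exact .inl ⟨x, rfl⟩
    · exact .inr (by simp)
  · simp [numCycles_eq_card_cycleType_add]
  · have hsupp : #l.formPerm.support = l.length := by
      rw [List.support_formPerm_of_nodup l hl fun x h => by simp [h] at hlen,
        List.toFinset_card_of_nodup hl]
    rw [numCycles_eq_card_cycleType_add, (List.isCycle_formPerm hl hlen).cycleType, hsupp,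
      Multiset.card_singleton]
    omega

theorem numCycles_swap_mul_formPerm_add_one {a b : α} {t : List α} (h : (a :: b :: t).Nodup) :
    (swap a b * (b :: t).formPerm).numCycles + 1 = (b :: t).formPerm.numCycles := by
  have h₁ := numCycles_formPerm_add_length h (List.cons_ne_nil _ _)
  have h₂ := numCycles_formPerm_add_length h.of_cons (List.cons_ne_nil _ _)
  rw [List.formPerm_cons_cons] at h₁
  simp only [List.length_cons] at h₁ h₂
  omega

theorem exists_formPerm_cons_eq_cycleOf (τ : Perm α) (b : α) :
    ∃ t, (b :: t).Nodup ∧ (b :: t).formPerm = τ.cycleOf b ∧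
      ∀ x ∈ b :: t, τ.SameCycle b x := by
  by_cases hb : b ∈ τ.support
  · obtain ⟨c, t, ht⟩ := List.exists_cons_of_ne_nil (toList_eq_nil_iff.not_left.mpr hb)
    have hc : c = b := by simpa [ht] using toList_getElem_zero τ b hb
    rw [hc] at ht
    refine ⟨t, ht ▸ nodup_toList τ b, ht ▸ formPerm_toList τ b, fun x hx => ?_⟩
    exact (mem_toList_iff.mp (ht ▸ hx)).1
  · refine ⟨[], List.nodup_singleton b, ?_, by simp [SameCycle.refl]⟩
    rw [List.formPerm_singleton, eq_comm, cycleOf_eq_one_iff]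
    simpa using hb

theorem disjoint_mul_inv_cycleOf (τ : Perm α) (b : α) :
    Disjoint (τ * (τ.cycleOf b)⁻¹) (τ.cycleOf b) := by
  by_cases hb : b ∈ τ.support
  · exact disjoint_mul_inv_of_mem_cycleFactorsFinset (cycleOf_mem_cycleFactorsFinset_iff.mpr hb)
  · rw [(cycleOf_eq_one_iff τ).mpr (by simpa using hb)]
    exact disjoint_one_right _

/-- Write `τ = ρ * c` with `c` the cycle through `b` and `ρ` disjoint from it; then
`swap a b * τ = ρ * (swap a b * c)`, and `swap a b * c` is `c` with `a` inserted before `b`. -/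
theorem numCycles_swap_mul_add_one {τ : Perm α} {a b : α} (ha : τ a = a) (hab : a ≠ b) :
    (swap a b * τ).numCycles + 1 = τ.numCycles := by
  obtain ⟨t, hnd, hc, hsame⟩ := exists_formPerm_cons_eq_cycleOf τ b
  set ρ := τ * (τ.cycleOf b)⁻¹
  have hρc : Disjoint ρ (τ.cycleOf b) := disjoint_mul_inv_cycleOf τ b
  have hτ : τ = ρ * τ.cycleOf b := by simp [ρ]
  have hρswap : Disjoint ρ (swap a b) := by
    intro x
    by_cases hx : x = a ∨ x = b
    · left
      rcases hx with rfl | rfl <;> simp [ρ, cycleOf_inv, cycleOf_apply, ha, apply_ite τ]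
    · push Not at hx
      exact .inr (swap_apply_of_ne_of_ne hx.1 hx.2)
  have ha' : a ∉ b :: t := fun h => hab ((hsame a h).eq_of_right ha).symm
  have hcycle := numCycles_swap_mul_formPerm_add_one (List.nodup_cons.mpr ⟨ha', hnd⟩)
  rw [hc] at hcycle
  have h₁ := (hρswap.mul_right hρc).numCycles_mul_add_card
  have h₂ := hρc.numCycles_mul_add_card
  rw [← mul_assoc, hρswap.commute.eq, mul_assoc, ← hτ] at h₁
  rw [← hτ] at h₂
  omega

theorem decomposeFin_symm_zero {n : ℕ} (e : Perm (Fin n)) :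
    decomposeFin.symm (0, e) = e.extendDomain (finSuccAboveEquiv 0) := by
  ext x
  cases x using Fin.cases with
  | zero => simp [extendDomain_apply_not_subtype]
  | succ j =>
    have := extendDomain_apply_image e (finSuccAboveEquiv 0) j
    simp only [finSuccAboveEquiv_apply, Fin.succAbove_zero] at this
    simp [decomposeFin_symm_apply_succ, this]

theorem decomposeFin_symm_eq_swap_mul {n : ℕ} (p : Fin (n + 1)) (e : Perm (Fin n)) :
    decomposeFin.symm (p, e) = swap 0 p * decomposeFin.symm (0, e) := by
  ext x
  cases x using Fin.cases <;> simp [decomposeFin_symm_apply_succ]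

theorem numCycles_decomposeFin_symm {n : ℕ} (p : Fin (n + 1)) (e : Perm (Fin n)) :
    (decomposeFin.symm (p, e)).numCycles = (if p = 0 then 1 else 0) + e.numCycles := by
  have h₀ : (decomposeFin.symm (0, e)).numCycles = e.numCycles + 1 := by
    have := numCycles_extendDomain_add_card (finSuccAboveEquiv (0 : Fin (n + 1))) e
    rw [← decomposeFin_symm_zero, Fintype.card_fin, Fintype.card_fin] at this
    omega
  split_ifs with hp
  · rw [hp, h₀, add_comm]
  · have := numCycles_swap_mul_add_one (decomposeFin_symm_apply_zero 0 e) (Ne.symm hp)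
    rw [← decomposeFin_symm_eq_swap_mul, h₀] at this
    omega

theorem card_filter_numCycles_eq_stirlingFirst (n k : ℕ) :
    #{σ : Perm (Fin n) | σ.numCycles = k} = Nat.stirlingFirst n k :=
  card_filter_eq_stirlingFirst (X := fun n => Perm (Fin n)) (fun _ σ => σ.numCycles) (by simp)
    (fun σ => by simp [numCycles, Subsingleton.elim σ 1]) (fun _ => decomposeFin) (fun _ => 0)
    (fun _ => numCycles_decomposeFin_symm) n k

end Equiv.Perm

instance Fin.decidablePredIsTop {n : ℕ} : DecidablePred (IsTop : Fin n → Prop) :=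
  fun _ => Fintype.decidableForallFintype

theorem Fin.isTop_succ_iff {n : ℕ} (z : Fin n) : IsTop z.succ ↔ IsTop z := by
  cases n with
  | zero => exact z.elim0
  | succ n => simp only [isTop_iff_eq_top, Fin.top_eq_last, Fin.succ_eq_last_succ]

abbrev RankingCompatible (n : ℕ) : Type := {f : Fin n → Fin n // ∀ i, i ≤ f i}

/-- The founder is the top element of `Fin n`; `IsTop` names it without assuming `n ≠ 0`. -/
def founderDegree {n : ℕ} (f : Fin n → Fin n) : ℕ := #{x | IsTop (f x)}

theorem founderDegree_cons {n : ℕ} (p : Fin (n + 1)) (g : Fin n → Fin n) :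
    founderDegree (Fin.cons p (fun x => (g x).succ) : Fin (n + 1) → Fin (n + 1)) =
      (if p = Fin.last n then 1 else 0) + founderDegree g := by
  simp only [founderDegree, card_filter, Fin.sum_univ_succ, Fin.cons_zero, Fin.cons_succ,
    Fin.isTop_succ_iff, isTop_iff_eq_top (a := p), Fin.top_eq_last]

def RankingCompatible.succEquiv (n : ℕ) :
    RankingCompatible (n + 1) ≃ Fin (n + 1) × RankingCompatible n where
  toFun f := (f.1 0,
    ⟨fun x => (f.1 x.succ).pred (Fin.pos_iff_ne_zero.mp ((Fin.succ_pos x).trans_le (f.2 _))),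
      fun x => (Fin.le_pred_iff _).mpr (f.2 _)⟩)
  invFun pg := ⟨Fin.cons pg.1 (fun x => (pg.2.1 x).succ), fun i => by
    cases i using Fin.cases with
    | zero => exact Fin.zero_le _
    | succ j => simpa using pg.2.2 j⟩
  left_inv f := by
    ext x
    cases x using Fin.cases <;> simp
  right_inv pg := by ext <;> simp

theorem card_filter_founderDegree_eq_stirlingFirst (n k : ℕ) :
    #{f : Fin n → Fin n | (∀ i, i ≤ f i) ∧ founderDegree f = k} =
      Nat.stirlingFirst n k := by
  rw [← Fintype.card_subtype, ← Fintype.card_congr (Equiv.subtypeSubtypeEquivSubtypeInter _ _),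
    Fintype.card_subtype]
  exact card_filter_eq_stirlingFirst (X := RankingCompatible) (fun _ f => founderDegree f.1)
    (by simp [Fintype.card_subtype]) (fun f => by simp [founderDegree])
    RankingCompatible.succEquiv (fun n => Fin.last n) (fun _ p g => founderDegree_cons p g.1) n k

theorem stmt16_general (M k : ℕ) (hM : 1 ≤ M) :
    (Finset.univ.filter (fun f : Fin M → Fin M =>
        (∀ i : Fin M, i ≤ f i) ∧
        (Finset.univ.filter (fun x : Fin M =>
          f x = ⟨M - 1, Nat.sub_one_lt_of_le hM le_rfl⟩)).card = k)).card
      = (Finset.univ.filter (fun σ : Equiv.Perm (Fin M) =>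
          σ.cycleType.card +
            (Finset.univ.filter (fun x : Fin M => σ x = x)).card = k)).card := by
  obtain ⟨m, rfl⟩ : ∃ m, M = m + 1 := ⟨M - 1, by omega⟩
  have hdeg (f : Fin (m + 1) → Fin (m + 1)) :
      #{x | f x = ⟨m + 1 - 1, Nat.sub_one_lt_of_le hM le_rfl⟩} = founderDegree f := by
    simp only [founderDegree, isTop_iff_eq_top, Fin.top_eq_last, Fin.ext_iff, Fin.val_last,
      Nat.add_sub_cancel]
  simp only [hdeg]
  exact (card_filter_founderDegree_eq_stirlingFirst _ k).trans
    (Equiv.Perm.card_filter_numCycles_eq_stirlingFirst _ k).symm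

/-- The number of ranking-compatible maps `f : Fin M → Fin M` such that exactly
`k` elements map to the top element (the founder) equals the number of
permutations of `Fin M` with exactly `k` cycles (fixed points counted as
cycles), i.e. the unsigned Stirling number of the first kind. -/
theorem stmt16 (M k : ℕ) (hM : 1 ≤ M) (hk : 1 ≤ k) (hkM : k ≤ M) :
    (Finset.univ.filter (fun f : Fin M → Fin M =>
        (∀ i : Fin M, i ≤ f i) ∧
        (Finset.univ.filter (fun x : Fin M =>
          f x = ⟨M - 1, Nat.sub_one_lt_of_le hM le_rfl⟩)).card = k)).card
      = (Finset.univ.filter (fun σ : Equiv.Perm (Fin M) =>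
          σ.cycleType.card +
            (Finset.univ.filter (fun x : Fin M => σ x = x)).card = k)).card :=
  stmt16_general M k hM
end
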